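/- Assume α + β ≤ 1/(n−1). Let i, j ∈ V with i ≠ j and suppose |s_i(t)| ≤ ζ_0·M(t) for some 0 < ζ_0 < 1. If at time t either i ∈ N_j^+(t) and B_t = 1, or i ∈ N_j^-(t) and D_t = 1, then after one step of the state-flipping update, |s_j(t+1)| ≤ (1 − (1 − ζ_0)·min{α, β})·M(t). -/

import Mathlib

/-!
Writing `c = 1 - α B |N⁺_j| - β D |N⁻_j|`, the update at `j` is
`s'_j = c s_j + α B ∑_{N⁺_j} s_k - β D ∑_{N⁻_j} s_k`, and `α + β ≤ 1/(n-1)` makes `c ≥ 0`.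
So `|s'_j|` is at most a convex combination of `|s_j|` and the `|s_k|`, `k ∈ N_j^±`, all `≤ M`;
the neighbour `i` enters with weight `α` or `β` and contributes only `ζ₀ M`, which saves
`(1 - ζ₀) min{α, β} M`.
-/

/-- The maximum absolute state `M = max_{i ∈ V} |x i|`. -/
noncomputable def Mmax {n : ℕ} (hn : 3 ≤ n) (x : Fin n → ℝ) : ℝ :=
  Finset.univ.sup' ⟨⟨0, by omega⟩, Finset.mem_univ _⟩ fun i => |x i|

open Finset

theorem abs_le_Mmax {n : ℕ} (hn : 3 ≤ n) (x : Fin n → ℝ) (k : Fin n) : |x k| ≤ Mmax hn x :=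
  le_sup' (fun i => |x i|) (mem_univ k)

theorem card_le_card_univ_sub_one_of_notMem {ι : Type*} [Fintype ι] {S : Finset ι} {j : ι}
    (hj : j ∉ S) : (#S : ℝ) ≤ Fintype.card ι - 1 := by
  have : #S + 1 ≤ Fintype.card ι := card_lt_univ_of_notMem hj
  have : (#S : ℝ) + 1 ≤ Fintype.card ι := by exact_mod_cast this
  linarith

section SumAbs

variable {ι : Type*} {S : Finset ι} {f : ι → ℝ} {M : ℝ}

theorem card_mul_sub_sum_abs_nonneg (hM : ∀ k, |f k| ≤ M) : 0 ≤ #S * M - ∑ k ∈ S, |f k| := by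
  have := sum_le_card_nsmul S (fun k => |f k|) M fun k _ => hM k
  rw [nsmul_eq_mul] at this
  linarith

theorem one_sub_mul_le_card_mul_sub_sum_abs [DecidableEq ι] {i : ι} {ζ : ℝ}
    (hM : ∀ k, |f k| ≤ M) (hi : i ∈ S) (hfi : |f i| ≤ ζ * M) :
    (1 - ζ) * M ≤ #S * M - ∑ k ∈ S, |f k| := by
  have hrest := card_mul_sub_sum_abs_nonneg (S := S.erase i) hM
  rw [card_erase_of_mem hi, Nat.cast_sub (one_le_card.mpr ⟨i, hi⟩), Nat.cast_one] at hrest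
  rw [← add_sum_erase S _ hi]
  linarith

end SumAbs

theorem abs_flip_update_le {ι : Type*} (s : ι → ℝ) (P N : Finset ι) {x a b M : ℝ}
    (ha : 0 ≤ a) (hb : 0 ≤ b) (hab : a * #P + b * #N ≤ 1) (hx : |x| ≤ M) :
    |x - a * ∑ k ∈ P, (x - s k) - b * ∑ k ∈ N, (x + s k)|
      ≤ M - a * (#P * M - ∑ k ∈ P, |s k|) - b * (#N * M - ∑ k ∈ N, |s k|) := by
  set c := 1 - a * #P - b * #N
  have hc : 0 ≤ c := by linarith
  have expand : x - a * ∑ k ∈ P, (x - s k) - b * ∑ k ∈ N, (x + s k)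
      = c * x + (a * ∑ k ∈ P, s k - b * ∑ k ∈ N, s k) := by
    simp only [c, sum_sub_distrib, sum_add_distrib, sum_const, nsmul_eq_mul]
    ring
  calc |x - a * ∑ k ∈ P, (x - s k) - b * ∑ k ∈ N, (x + s k)|
      ≤ c * |x| + (a * |∑ k ∈ P, s k| + b * |∑ k ∈ N, s k|) := by
        rw [expand]
        refine (abs_add_le _ _).trans (add_le_add (by rw [abs_mul, abs_of_nonneg hc]) ?_)
        refine (abs_sub _ _).trans (le_of_eq ?_)
        rw [abs_mul, abs_mul, abs_of_nonneg ha, abs_of_nonneg hb]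
    _ ≤ c * M + (a * ∑ k ∈ P, |s k| + b * ∑ k ∈ N, |s k|) := by
        gcongr <;> exact abs_sum_le_sum_abs _ _
    _ = M - a * (#P * M - ∑ k ∈ P, |s k|) - b * (#N * M - ∑ k ∈ N, |s k|) := by
        ring

theorem state_flipping_neighbor_pulled_down_general
    {n : ℕ} (hn : 3 ≤ n)
    (α β : ℝ) (hα : 0 < α) (hβ : 0 < β)
    (hαβ : α + β ≤ 1 / ((n : ℝ) - 1))
    (Np Nd : Fin n → Finset (Fin n))
    (hNp : ∀ i, i ∉ Np i) (hNd : ∀ i, i ∉ Nd i)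
    (B D : ℝ) (hB : B = 0 ∨ B = 1) (hD : D = 0 ∨ D = 1)
    (s s' : Fin n → ℝ)
    (hupd : ∀ k, s' k = s k - α * B * (∑ j ∈ Np k, (s k - s j))
        - β * D * (∑ j ∈ Nd k, (s k + s j)))
    (i j : Fin n)
    (ζ₀ : ℝ) (hζ₁ : ζ₀ < 1)
    (hi : |s i| ≤ ζ₀ * Mmax hn s)
    (hedge : (i ∈ Np j ∧ B = 1) ∨ (i ∈ Nd j ∧ D = 1)) :
    |s' j| ≤ (1 - (1 - ζ₀) * min α β) * Mmax hn s := by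
  set M := Mmax hn s
  have hM : ∀ k, |s k| ≤ M := abs_le_Mmax hn s
  have hslack : 0 ≤ (1 - ζ₀) * M := mul_nonneg (by linarith) ((abs_nonneg _).trans (hM i))
  have hαB : 0 ≤ α * B ∧ α * B ≤ α := by rcases hB with rfl | rfl <;> simp [hα.le]
  have hβD : 0 ≤ β * D ∧ β * D ≤ β := by rcases hD with rfl | rfl <;> simp [hβ.le]
  have hweights : α * B * #(Np j) + β * D * #(Nd j) ≤ 1 := by
    have hn1 : (0 : ℝ) < n - 1 := by
      have : (3 : ℝ) ≤ n := by exact_mod_cast hn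
      linarith
    have hP := card_le_card_univ_sub_one_of_notMem (hNp j)
    have hN := card_le_card_univ_sub_one_of_notMem (hNd j)
    rw [Fintype.card_fin] at hP hN
    have hαβn := (le_div_iff₀ hn1).mp hαβ
    linarith [mul_le_mul hαB.2 hP (Nat.cast_nonneg _) hα.le,
      mul_le_mul hβD.2 hN (Nat.cast_nonneg _) hβ.le]
  have hstep := hupd j ▸ abs_flip_update_le s (Np j) (Nd j) hαB.1 hβD.1 hweights (hM j)
  have hP := card_mul_sub_sum_abs_nonneg (S := Np j) hM
  have hN := card_mul_sub_sum_abs_nonneg (S := Nd j) hM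
  rcases hedge with ⟨hiP, rfl⟩ | ⟨hiN, rfl⟩
  · have hgap := one_sub_mul_le_card_mul_sub_sum_abs hM hiP hi
    linarith [mul_le_mul_of_nonneg_left hgap hα.le, mul_nonneg hβD.1 hN,
      mul_le_mul_of_nonneg_right (min_le_left α β) hslack]
  · have hgap := one_sub_mul_le_card_mul_sub_sum_abs hM hiN hi
    linarith [mul_le_mul_of_nonneg_left hgap hβ.le, mul_nonneg hαB.1 hP,
      mul_le_mul_of_nonneg_right (min_le_right α β) hslack]

/-- if `α + β ≤ 1/(n-1)`, `|s_i(t)| ≤ ζ₀·M(t)` with `0 < ζ₀ < 1`, and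
at time `t` either `i ∈ N_j^+(t)` and `B_t = 1` or `i ∈ N_j^-(t)` and `D_t = 1`,
then `|s_j(t+1)| ≤ (1 - (1-ζ₀)·min{α,β})·M(t)`. -/
theorem state_flipping_neighbor_pulled_down
    {n : ℕ} (hn : 3 ≤ n)
    (α β : ℝ) (hα : 0 < α) (hβ : 0 < β)
    (hαβ : α + β ≤ 1 / ((n : ℝ) - 1))
    (Np Nd : Fin n → Finset (Fin n))
    (hNp : ∀ i, i ∉ Np i) (hNd : ∀ i, i ∉ Nd i)
    (hdisj : ∀ i, Disjoint (Np i) (Nd i))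
    (B D : ℝ) (hB : B = 0 ∨ B = 1) (hD : D = 0 ∨ D = 1)
    (s s' : Fin n → ℝ)
    (hupd : ∀ k, s' k = s k - α * B * (∑ j ∈ Np k, (s k - s j))
        - β * D * (∑ j ∈ Nd k, (s k + s j)))
    (i j : Fin n) (hij : i ≠ j)
    (ζ₀ : ℝ) (hζ₀ : 0 < ζ₀) (hζ₁ : ζ₀ < 1)
    (hi : |s i| ≤ ζ₀ * Mmax hn s)
    (hedge : (i ∈ Np j ∧ B = 1) ∨ (i ∈ Nd j ∧ D = 1)) :
    |s' j| ≤ (1 - (1 - ζ₀) * min α β) * Mmax hn s :=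
  state_flipping_neighbor_pulled_down_general hn α β hα hβ hαβ Np Nd hNp hNd B D hB hD s s' hupd i j
    ζ₀ hζ₁ hi hedge
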